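/- Let (T_s)_{s∈S} be a bounded representation of a commutative monoid (S,+) on a Banach space E and let P ∈ L(E) be a bounded projection commuting with every T_s. If (a) the restrictions T_s|_{ker P} converge to 0 in the operator norm of L(ker P), and (b) the set {T_s|_{PE} : s ∈ S} is relatively compact in L(PE), then the semigroup at infinity 𝒯_∞ is non-empty and compact, and the projection at infinity P_∞ satisfies P_∞E ⊆ PE and ker P ⊆ ker P_∞. If additionally (c) for every x ∈ PE with x ≠ 0 the net (T_s x)_{s∈S} does not converge to 0, then P_∞ = P. -/

import Mathlib

open Filter Topology

/-- The pre-order on a commutative monoid `S`: `s ≤ t` iff `t = s + r` for some `r ∈ S`. -/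
def sgLE {S : Type*} [AddCommMonoid S] (s t : S) : Prop := ∃ r : S, t = s + r

/-- The filter of "tails" of the directed set `(S, sgLE)`. -/
def sgFilter (S : Type*) [AddCommMonoid S] : Filter S :=
  ⨅ s : S, Filter.principal {t | sgLE s t}

/-- The semigroup at infinity with respect to the operator norm:
`𝒯_∞ = ⋂_{r ∈ S} closure {T_s : s ≥ r}`. -/
def sgAtInfty {E : Type*} [NormedAddCommGroup E] [NormedSpace ℝ E]
    {S : Type*} [AddCommMonoid S] (T : S → E →L[ℝ] E) : Set (E →L[ℝ] E) :=
  ⋂ r : S, closure (T '' {s | sgLE r s})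

/-- `P` is the neutral element of the semigroup at infinity (the projection at infinity). -/
def IsNeutralAtInfty {E : Type*} [NormedAddCommGroup E] [NormedSpace ℝ E]
    {S : Type*} [AddCommMonoid S] (T : S → E →L[ℝ] E) (P : E →L[ℝ] E) : Prop :=
  P ∈ sgAtInfty T ∧ ∀ A ∈ sgAtInfty T, P * A = A ∧ A * P = A

/-- The restriction of a bounded operator to an invariant subspace, as a bounded operator on that
subspace (with the inherited norm). -/
def restrictCLM {E : Type*} [NormedAddCommGroup E] [NormedSpace ℝ E]
    (A : E →L[ℝ] E) (p : Submodule ℝ E) (h : ∀ x ∈ p, A x ∈ p) : p →L[ℝ] p where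
  toLinearMap := (A : E →ₗ[ℝ] E).restrict h
  cont := Continuous.subtype_mk ((map_continuous A).comp continuous_subtype_val) _

/-!
By (a), `T s - T s * P → 0` in operator norm, so `(T s)` and `(T s * P)` have the same cluster
points. The family `T s * P` is the image of `T s|_{PE}` under the continuous map
`A ↦ A ∘ P : L(PE) → L(E)`, so by (b) its closure is a compact set `K`, all of whose elements `B`
satisfy `B * P = B = P * B`. Hence `𝒯_∞` is a nonempty closed subset of `K`, which gives the
first part. For the second, let `Q` be neutral in `𝒯_∞` and `y = P x - Q x`. Then `y ∈ PE` and
`Q y = 0`; every cluster point `B` of `(T s * P)` lies in `𝒯_∞`, so `B y = B (Q y) = 0`, and by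
compactness of `K` this forces `T s y → 0`. By (c), `y = 0`.
-/

open Set

section ClusterPt

variable {α X : Type*} [TopologicalSpace X] {l : Filter α}

theorem MapClusterPt.of_tendsto_sub [AddGroup X] [IsTopologicalAddGroup X] {u v : α → X} {x : X}
    (hu : MapClusterPt x l u) (huv : Tendsto (fun i => v i - u i) l (𝓝 0)) :
    MapClusterPt x l v := by
  obtain ⟨𝒰, h𝒰l, hu𝒰⟩ := mapClusterPt_iff_ultrafilter.mp hu
  refine mapClusterPt_iff_ultrafilter.mpr ⟨𝒰, h𝒰l, ?_⟩
  simpa only [zero_add, sub_add_cancel] using (huv.mono_left h𝒰l).add hu𝒰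

theorem IsCompact.tendsto_comp_of_forall_mapClusterPt {Y : Type*} [TopologicalSpace Y]
    {K : Set X} (hK : IsCompact K) {u : α → X} (hu : ∀ᶠ i in l, u i ∈ K) {g : X → Y}
    (hg : Continuous g) {y : Y} (h : ∀ x ∈ K, MapClusterPt x l u → g x = y) :
    Tendsto (g ∘ u) l (𝓝 y) :=
  (hg.tendsto_nhdsSet_nhds (s := {x | g x = y}) fun _ hx => hx).comp
    (hK.tendsto_nhdsSet_of_mapClusterPt hu h)

end ClusterPt

section sgFilter

variable {S : Type*} [AddCommMonoid S]

theorem sgLE_refl (s : S) : sgLE s s := ⟨0, (add_zero s).symm⟩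

theorem sgFilter_hasBasis : (sgFilter S).HasBasis (fun _ => True) (fun r => {t | sgLE r t}) :=
  hasBasis_iInf_principal fun a b =>
    ⟨a + b, fun _ ⟨r, hr⟩ => ⟨b + r, by rw [hr, add_assoc]⟩,
      fun _ ⟨r, hr⟩ => ⟨a + r, by rw [hr, add_comm a b, add_assoc]⟩⟩

instance sgFilter_neBot : (sgFilter S).NeBot :=
  sgFilter_hasBasis.neBot_iff.mpr fun {r} _ => ⟨r, sgLE_refl r⟩

variable {E : Type*} [NormedAddCommGroup E] [NormedSpace ℝ E]

theorem mem_sgAtInfty_iff_mapClusterPt (T : S → E →L[ℝ] E) {A : E →L[ℝ] E} :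
    A ∈ sgAtInfty T ↔ MapClusterPt A (sgFilter S) T := by
  simp [sgAtInfty, MapClusterPt, (sgFilter_hasBasis.map T).clusterPt_iff_forall_mem_closure]

theorem isClosed_sgAtInfty (T : S → E →L[ℝ] E) : IsClosed (sgAtInfty T) :=
  isClosed_iInter fun _ => isClosed_closure

end sgFilter

section Operators

variable {E : Type*} [NormedAddCommGroup E] [NormedSpace ℝ E] {ι : Type*}

theorem range_le_range_of_mul_eq {P Q : E →L[ℝ] E} (h : P * Q = Q) :
    LinearMap.range (Q : E →ₗ[ℝ] E) ≤ LinearMap.range (P : E →ₗ[ℝ] E) := by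
  rw [← h]
  exact LinearMap.range_comp_le_range _ _

theorem ker_le_ker_of_mul_eq {P Q : E →L[ℝ] E} (h : Q * P = Q) :
    LinearMap.ker (P : E →ₗ[ℝ] E) ≤ LinearMap.ker (Q : E →ₗ[ℝ] E) := by
  rw [← h]
  exact LinearMap.ker_le_ker_comp _ _

theorem tendsto_sub_mul_of_forall_ker {l : Filter ι} {T : ι → E →L[ℝ] E} {P : E →L[ℝ] E}
    (hproj : P * P = P)
    (ha : ∀ ε : ℝ, 0 < ε → ∀ᶠ i in l, ∀ x : E, P x = 0 → ‖T i x‖ ≤ ε * ‖x‖) :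
    Tendsto (fun i => T i - T i * P) l (𝓝 0) := by
  have hker : ∀ x, P ((1 - P) x) = 0 := fun x => by
    rw [← mul_apply_eq_comp, mul_sub, mul_one, hproj, sub_self, zero_apply]
  have hbound : ∀ ε : ℝ, 0 < ε → ∀ᶠ i in l, ‖T i - T i * P‖ ≤ ε * ‖1 - P‖ := fun ε hε => by
    filter_upwards [ha ε hε] with i hi
    refine ContinuousLinearMap.opNorm_le_bound _ (by positivity) fun x => ?_
    calc ‖(T i - T i * P) x‖ = ‖T i ((1 - P) x)‖ := by simp
      _ ≤ ε * ‖(1 - P) x‖ := hi _ (hker x)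
      _ ≤ ε * (‖1 - P‖ * ‖x‖) := by gcongr; exact (1 - P).le_opNorm x
      _ = ε * ‖1 - P‖ * ‖x‖ := (mul_assoc _ _ _).symm
  refine NormedAddGroup.tendsto_nhds_zero.mpr fun ε hε => ?_
  filter_upwards [hbound (ε / (‖1 - P‖ + 1)) (by positivity)] with i hi
  calc ‖T i - T i * P‖ ≤ ε / (‖1 - P‖ + 1) * ‖1 - P‖ := hi
    _ < ε := by
      rw [div_mul_eq_mul_div, div_lt_iff₀ (by positivity)]
      nlinarith

theorem isCompact_closure_range_mul_of_restrict (T : ι → E →L[ℝ] E) (P : E →L[ℝ] E)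
    {p : Submodule ℝ E} (hP : ∀ x, P x ∈ p) (hT : ∀ i, ∀ x ∈ p, T i x ∈ p)
    (hb : IsCompact (closure (range fun i => restrictCLM (T i) p (hT i)))) :
    IsCompact (closure (range fun i => T i * P)) := by
  let Φ : (p →L[ℝ] p) → E →L[ℝ] E := fun A => (p.subtypeL ∘L A) ∘L P.codRestrict p hP
  have hΦ : Continuous Φ := (continuous_const.clm_comp continuous_id).clm_comp continuous_const
  have hrange : range (fun i => T i * P) = Φ '' range fun i => restrictCLM (T i) p (hT i) := by
    rw [← range_comp]
    rfl
  exact (hb.image hΦ).closure_of_subset (hrange ▸ image_mono subset_closure)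

theorem mul_proj_eq_and_proj_mul_eq_of_mem_closure {T : ι → E →L[ℝ] E} {P B : E →L[ℝ] E}
    (hproj : P * P = P) (hcomm : ∀ i, P * T i = T i * P)
    (hB : B ∈ closure (range fun i => T i * P)) : B * P = B ∧ P * B = B := by
  have hclosed : IsClosed {B : E →L[ℝ] E | B * P = B ∧ P * B = B} :=
    (isClosed_eq (continuous_id.mul continuous_const) continuous_id).inter
      (isClosed_eq (continuous_const.mul continuous_id) continuous_id)
  refine closure_minimal ?_ hclosed hB
  rintro _ ⟨i, rfl⟩
  exact ⟨by rw [mul_assoc, hproj], by rw [← mul_assoc, hcomm, mul_assoc, hproj]⟩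

end Operators

section AtInfty

variable {E : Type*} [NormedAddCommGroup E] [NormedSpace ℝ E] {S : Type*} [AddCommMonoid S]
  {T : S → E →L[ℝ] E} {P : E →L[ℝ] E}

theorem mem_sgAtInfty_of_mapClusterPt_mul
    (hlim : Tendsto (fun s => T s - T s * P) (sgFilter S) (𝓝 0)) {B : E →L[ℝ] E}
    (hB : MapClusterPt B (sgFilter S) fun s => T s * P) : B ∈ sgAtInfty T :=
  (mem_sgAtInfty_iff_mapClusterPt T).mpr (hB.of_tendsto_sub hlim)

theorem sgAtInfty_subset_closure_range_mul
    (hlim : Tendsto (fun s => T s - T s * P) (sgFilter S) (𝓝 0)) :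
    sgAtInfty T ⊆ closure (range fun s => T s * P) := fun _ hA =>
  isClosed_closure.mem_of_mapClusterPt
    (((mem_sgAtInfty_iff_mapClusterPt T).mp hA).of_tendsto_sub (by simpa using hlim.neg))
    (.of_forall fun s => subset_closure ⟨s, rfl⟩)

theorem sgAtInfty_nonempty (hK : IsCompact (closure (range fun s => T s * P)))
    (hlim : Tendsto (fun s => T s - T s * P) (sgFilter S) (𝓝 0)) : (sgAtInfty T).Nonempty := by
  obtain ⟨B, -, hB⟩ := hK.exists_mapClusterPt (f := sgFilter S)
    (tendsto_principal.mpr (.of_forall fun s => subset_closure ⟨s, rfl⟩))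
  exact ⟨B, mem_sgAtInfty_of_mapClusterPt_mul hlim hB⟩

theorem tendsto_apply_zero_of_isNeutralAtInfty (hK : IsCompact (closure (range fun s => T s * P)))
    (hlim : Tendsto (fun s => T s - T s * P) (sgFilter S) (𝓝 0)) {Q : E →L[ℝ] E}
    (hQ : IsNeutralAtInfty T Q) {y : E} (hPy : P y = y) (hQy : Q y = 0) :
    Tendsto (fun s => T s y) (sgFilter S) (𝓝 0) := by
  have h := hK.tendsto_comp_of_forall_mapClusterPt (u := fun s => T s * P)
    (.of_forall fun s => subset_closure ⟨s, rfl⟩) (ContinuousLinearMap.apply ℝ E y).continuous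
    fun B _ hB => by
      have hBQ : B * Q = B := (hQ.2 B (mem_sgAtInfty_of_mapClusterPt_mul hlim hB)).2
      rw [ContinuousLinearMap.apply_apply, ← hBQ, mul_apply_eq_comp, hQy, map_zero]
  simpa [Function.comp_def, hPy] using h

theorem IsNeutralAtInfty.eq_proj (hproj : P * P = P) (hcomm : ∀ s, P * T s = T s * P)
    (hK : IsCompact (closure (range fun s => T s * P)))
    (hlim : Tendsto (fun s => T s - T s * P) (sgFilter S) (𝓝 0))
    (hc : ∀ x : E, x ∈ LinearMap.range (P : E →ₗ[ℝ] E) → x ≠ 0 →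
        ¬ Tendsto (fun s => T s x) (sgFilter S) (𝓝 0))
    {Q : E →L[ℝ] E} (hQ : IsNeutralAtInfty T Q) : Q = P := by
  obtain ⟨hQP, hPQ⟩ := mul_proj_eq_and_proj_mul_eq_of_mem_closure hproj hcomm
    (sgAtInfty_subset_closure_range_mul hlim hQ.1)
  have hQQ : Q * Q = Q := (hQ.2 Q hQ.1).1
  ext x
  have hPy : P (P x - Q x) = P x - Q x := by
    rw [map_sub, ← mul_apply_eq_comp, ← mul_apply_eq_comp, hproj, hPQ]
  have hQy : Q (P x - Q x) = 0 := by
    rw [map_sub, ← mul_apply_eq_comp, ← mul_apply_eq_comp, hQQ, hQP, sub_self]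
  by_contra hne
  exact hc _ ⟨_, hPy⟩ (sub_ne_zero.mpr (Ne.symm hne))
    (tendsto_apply_zero_of_isNeutralAtInfty hK hlim hQ hPy hQy)

end AtInfty

/-- Let `(T_s)` be a bounded representation of a commutative monoid on a Banach
space and let `P` be a projection commuting with every `T_s`. If (a) the restrictions
`T_s|_{ker P}` converge to `0` in the operator norm, and (b) the set `{T_s|_{PE} : s ∈ S}` is
relatively compact in `L(PE)`, then the semigroup at infinity is non-empty and compact and the
projection at infinity `P_∞` satisfies `P_∞E ⊆ PE` and `ker P ⊆ ker P_∞`. If additionally (c)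
for no `0 ≠ x ∈ PE` the net `(T_s x)` converges to `0`, then `P_∞ = P`. -/
theorem statement5 {E : Type*} [NormedAddCommGroup E] [NormedSpace ℝ E]
    {S : Type*} [AddCommMonoid S] (T : S → E →L[ℝ] E)
    (P : E →L[ℝ] E) (hproj : P * P = P)
    (hcomm : ∀ s : S, P * T s = T s * P)
    (ha : ∀ ε : ℝ, 0 < ε → ∀ᶠ s in sgFilter S, ∀ x : E, P x = 0 → ‖T s x‖ ≤ ε * ‖x‖)
    (hb : IsCompact (closure (Set.range (fun s : S =>
      restrictCLM (T s) (LinearMap.range P) (fun x hx => by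
        obtain ⟨y, rfl⟩ := hx
        refine (LinearMap.mem_range (f := (P : E →ₗ[ℝ] E))).mpr ⟨T s y, ?_⟩
        have h := congrArg (fun A : E →L[ℝ] E => A y) (hcomm s)
        simpa using h))))) :
    ((sgAtInfty T).Nonempty ∧ IsCompact (sgAtInfty T) ∧
      (∀ Q : E →L[ℝ] E, IsNeutralAtInfty T Q →
        LinearMap.range (Q : E →ₗ[ℝ] E) ≤ LinearMap.range (P : E →ₗ[ℝ] E) ∧
          LinearMap.ker (P : E →ₗ[ℝ] E) ≤ LinearMap.ker (Q : E →ₗ[ℝ] E))) ∧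
    ((∀ x : E, x ∈ LinearMap.range (P : E →ₗ[ℝ] E) → x ≠ 0 →
        ¬ Tendsto (fun s => T s x) (sgFilter S) (𝓝 0)) →
      ∀ Q : E →L[ℝ] E, IsNeutralAtInfty T Q → Q = P) := by
  set K := closure (range fun s => T s * P)
  have hK : IsCompact K :=
    isCompact_closure_range_mul_of_restrict T P (LinearMap.mem_range_self _) _ hb
  have hlim := tendsto_sub_mul_of_forall_ker hproj ha
  have hsub : sgAtInfty T ⊆ K := sgAtInfty_subset_closure_range_mul hlim
  refine ⟨⟨sgAtInfty_nonempty hK hlim, hK.of_isClosed_subset (isClosed_sgAtInfty T) hsub,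
    fun Q hQ => ?_⟩, fun hc Q hQ => hQ.eq_proj hproj hcomm hK hlim hc⟩
  obtain ⟨hQP, hPQ⟩ := mul_proj_eq_and_proj_mul_eq_of_mem_closure hproj hcomm (hsub hQ.1)
  exact ⟨range_le_range_of_mul_eq hPQ, ker_le_ker_of_mul_eq hQP⟩
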